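/- Cosine formula: Let n ≥ 2 and let f : ℝ/Lℤ → ℝⁿ be an injective closed curve of class C² parametrized by arclength (‖f'(s)‖ = 1 for all s), with unit tangent τ = f'. For s₁ ≠ s₂ define the cosine of the conformal angle by cos φ(s₁,s₂) = 2(Δf·τ(s₁))(Δf·τ(s₂))/‖Δf‖² − τ(s₁)·τ(s₂), where Δf = f(s₁) − f(s₂). Then ∬_{(ℝ/Lℤ)²} (1 − cos φ(s₁,s₂))/‖f(s₁) − f(s₂)‖² ds₁ ds₂ = E(f) − 4. -/

import Mathlib

/-!
Write `Δf = f s₁ - f s₂`, `τ = f'` and `G(s₁, s₂) = ⟪Δf, τ s₁⟫ / ‖Δf‖²`. Differentiating in `s₂`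
gives `∂G/∂s₂ = cos φ / ‖Δf‖²`, so `(1 - cos φ)/‖Δf‖²` differs from the Möbius integrand
`1/‖Δf‖² - 1/𝒟²` by `1/𝒟² - ∂G/∂s₂`. For fixed `s₁`, on the window `|s₂ - s₁| ≤ L/2` where
`𝒟 = |s₁ - s₂|`, this difference has the primitive `1/(s₁ - s₂) - G(s₁, s₂)`. Since `τ` is
Lipschitz, `G(s₁, s₂) = 1/(s₁ - s₂) + O(|s₁ - s₂|)`, so the primitive is continuous across the
diagonal, and its values at `s₂ = s₁ ± L/2` give the integral `-4/L`. Integrating over `s₁`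
yields `-4`. The same Taylor estimates, together with `‖Δf‖` being bounded below away from the
diagonal (injectivity and compactness), make both integrands bounded.
-/

open MeasureTheory Set Function Filter Topology
open scoped RealInnerProductSpace NNReal

theorem iInf_abs_add_intCast_mul_eq_norm_coe {L : ℝ} (x : ℝ) :
    ⨅ k : ℤ, |x + k * L| = ‖(x : AddCircle L)‖ := by
  refine le_antisymm ?_ (le_ciInf fun k => ?_)
  · refine (ciInf_le ⟨0, by rintro _ ⟨k, rfl⟩; positivity⟩ (-round (L⁻¹ * x))).trans_eq ?_
    rw [AddCircle.norm_eq]; push_cast; ring_nf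
  · calc ‖(x : AddCircle L)‖ = ‖((x + k * L : ℝ) : AddCircle L)‖ := by simp
      _ ≤ |x + k * L| := QuotientAddGroup.norm_mk_le_norm

theorem Function.Periodic.deriv {F : Type*} [NormedAddCommGroup F] [NormedSpace ℝ F]
    {g : ℝ → F} {L : ℝ} (hg : Periodic g L) : Periodic (deriv g) L := fun x => by
  rw [← deriv_comp_add_const, show (fun y => g (y + L)) = g from funext hg]

theorem Function.Periodic.exists_lipschitzWith {F : Type*} [NormedAddCommGroup F]
    [NormedSpace ℝ F] {g : ℝ → F} {L : ℝ} (hL : L ≠ 0) (hg : Periodic g L)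
    (hg₁ : ContDiff ℝ 1 g) : ∃ M, LipschitzWith M g := by
  obtain ⟨C, hC⟩ := isBounded_iff_forall_norm_le.mp
    (hg.deriv.isBounded_of_continuous hL (hg₁.continuous_deriv le_rfl))
  refine ⟨C.toNNReal, lipschitzWith_of_nnnorm_deriv_le (hg₁.differentiable one_ne_zero)
    fun x => ?_⟩
  rw [← NNReal.coe_le_coe, coe_nnnorm]
  exact (hC _ ⟨x, rfl⟩).trans (Real.le_coe_toNNReal C)

theorem apply_ne_apply_of_abs_sub_lt {α : Type*} {f : ℝ → α} {L : ℝ} (hL : 0 < L)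
    (hinj : ∀ s₁ s₂, f s₁ = f s₂ → ∃ k : ℤ, s₁ - s₂ = k * L) {a b : ℝ} (hab : a ≠ b)
    (hlt : |a - b| < L) : f a ≠ f b := fun heq => by
  obtain ⟨k, hk⟩ := hinj a b heq
  rw [hk, abs_mul, abs_of_pos hL] at hlt
  have hk0 : k = 0 := by
    have : |(k : ℝ)| < 1 := by nlinarith
    exact Int.abs_lt_one_iff.mp (by exact_mod_cast this)
  exact hab (by simpa [hk0, sub_eq_zero] using hk)

section NormedGroup

variable {E : Type*} [NormedAddCommGroup E] {f : ℝ → E} {L : ℝ}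

noncomputable def mobiusEnergyDensity (L : ℝ) (f : ℝ → E) (s₁ s₂ : ℝ) : ℝ :=
  1 / ‖f s₁ - f s₂‖ ^ 2 - 1 / ‖((s₁ - s₂ : ℝ) : AddCircle L)‖ ^ 2

theorem Function.Periodic.mobiusEnergyDensity (hper : Periodic f L) (s₁ : ℝ) :
    Periodic (mobiusEnergyDensity L f s₁) L := fun s₂ => by
  simp [_root_.mobiusEnergyDensity, hper s₂, sub_add_eq_sub_sub, AddCircle.coe_period]

theorem exists_pos_le_norm_sub_of_le_norm_coe (hL : 0 < L) (hf : Continuous f)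
    (hper : Periodic f L) (hinj : ∀ s₁ s₂, f s₁ = f s₂ → ∃ k : ℤ, s₁ - s₂ = k * L) {δ : ℝ}
    (hδ : 0 < δ) :
    ∃ c > 0, ∀ s₁ s₂, δ ≤ ‖((s₁ - s₂ : ℝ) : AddCircle L)‖ → c ≤ ‖f s₁ - f s₂‖ := by
  set K := (Icc 0 L ×ˢ Icc 0 L) ∩ {p : ℝ × ℝ | δ ≤ ‖((p.1 - p.2 : ℝ) : AddCircle L)‖}
  have hK : IsCompact K :=
    (isCompact_Icc.prod isCompact_Icc).inter_right (isClosed_le continuous_const (by fun_prop))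
  obtain ⟨c, hc, hcK⟩ := hK.exists_forall_le' (f := fun p => ‖f p.1 - f p.2‖) (a := 0)
    (by fun_prop) fun p hp => by
      refine norm_pos_iff.mpr (sub_ne_zero.mpr fun heq => ?_)
      obtain ⟨k, hk⟩ := hinj _ _ heq
      have hδk : δ ≤ ‖((p.1 - p.2 : ℝ) : AddCircle L)‖ := hp.2
      rw [hk] at hδk
      simp [AddCircle.coe_period] at hδk
      linarith
  refine ⟨c, hc, fun s₁ s₂ hs => ?_⟩
  obtain ⟨k₁, hk₁, -⟩ := existsUnique_sub_zsmul_mem_Ico hL s₁ 0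
  obtain ⟨k₂, hk₂, -⟩ := existsUnique_sub_zsmul_mem_Ico hL s₂ 0
  rw [zero_add] at hk₁ hk₂
  have := hcK (s₁ - k₁ • L, s₂ - k₂ • L) ⟨⟨Ico_subset_Icc_self hk₁, Ico_subset_Icc_self hk₂⟩,
    by simpa [AddCircle.coe_period] using hs⟩
  simpa [hper.sub_int_mul_eq] using this

theorem intervalIntegrable_integral_mobiusEnergyDensity (hL : 0 ≤ L) (hf : Continuous f)
    {C : ℝ} (hC : ∀ s₁ s₂, |mobiusEnergyDensity L f s₁ s₂| ≤ C) :
    IntervalIntegrable (fun s => ∫ x in (0 : ℝ)..L, mobiusEnergyDensity L f s x) volume 0 L := by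
  have hR : Measurable fun p : ℝ × ℝ => ‖f p.1 - f p.2‖ := (by fun_prop : Continuous _).measurable
  have hmeas : Measurable fun p : ℝ × ℝ => mobiusEnergyDensity L f p.1 p.2 := by
    unfold mobiusEnergyDensity; fun_prop
  refine (intervalIntegrable_const (c := C * L)).mono_fun' ?_ (ae_of_all _ fun s => ?_)
  · simp_rw [intervalIntegral.integral_of_le hL]
    exact (hmeas.stronglyMeasurable.integral_prod_right'
      (ν := volume.restrict (Ioc 0 L))).aestronglyMeasurable
  · simpa [abs_of_nonneg hL] using
      intervalIntegral.norm_integral_le_of_norm_le_const (a := 0) (b := L)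
        (f := mobiusEnergyDensity L f s) fun x _ => (Real.norm_eq_abs _).trans_le (hC s x)

end NormedGroup

section InnerProductSpace

variable {E : Type*} [NormedAddCommGroup E] [InnerProductSpace ℝ E] {f : ℝ → E} {L : ℝ}
  {M : ℝ≥0}

theorem one_sub_real_inner_eq_of_norm_eq_one {u v : E} (hu : ‖u‖ = 1) (hv : ‖v‖ = 1) :
    1 - ⟪u, v⟫ = ‖u - v‖ ^ 2 / 2 := by
  rw [norm_sub_sq_real, hu, hv]; ring

theorem abs_inner_sub_sub_le_of_norm_deriv_sub_le (hf : Differentiable ℝ f)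
    (hτ : ∀ r, ‖deriv f r‖ = 1) {v : E} (hv : ‖v‖ = 1) {a b δ : ℝ}
    (hδ : ∀ r ∈ uIcc a b, ‖deriv f r - v‖ ≤ δ) :
    |⟪f a - f b, v⟫ - (a - b)| ≤ δ ^ 2 / 2 * |a - b| := by
  have hderiv : ∀ r, HasDerivAt (fun r => ⟪f r, v⟫ - r) (⟪deriv f r, v⟫ - 1) r := fun r =>
    ((hf r).hasDerivAt.inner ℝ (hasDerivAt_const r v)).sub (hasDerivAt_id r) |>.congr_deriv
      (by simp)
  have hbound : ∀ r ∈ uIcc a b, ‖⟪deriv f r, v⟫ - 1‖ ≤ δ ^ 2 / 2 := fun r hr => by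
    rw [norm_sub_rev, Real.norm_eq_abs, one_sub_real_inner_eq_of_norm_eq_one (hτ r) hv,
      abs_of_nonneg (by positivity)]
    gcongr
    exact hδ r hr
  have := Convex.norm_image_sub_le_of_norm_hasDerivWithin_le
    (fun r _ => (hderiv r).hasDerivWithinAt) hbound (convex_uIcc a b) right_mem_uIcc left_mem_uIcc
  rwa [Real.norm_eq_abs, Real.norm_eq_abs, sub_sub_sub_comm, ← inner_sub_left] at this

theorem abs_inner_sub_deriv_left_sub_le (hf : Differentiable ℝ f) (hτ : ∀ r, ‖deriv f r‖ = 1)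
    (hlip : LipschitzWith M (deriv f)) (a b : ℝ) :
    |⟪f a - f b, deriv f a⟫ - (a - b)| ≤ M ^ 2 * |a - b| ^ 3 / 2 := by
  have := abs_inner_sub_sub_le_of_norm_deriv_sub_le hf hτ (hτ a) (δ := M * |a - b|)
    fun r hr => by
      rw [← dist_eq_norm, abs_sub_comm]
      exact (hlip.dist_le_mul r a).trans (by gcongr; exact abs_sub_left_of_mem_uIcc hr)
  linarith

theorem abs_inner_sub_deriv_right_sub_le (hf : Differentiable ℝ f) (hτ : ∀ r, ‖deriv f r‖ = 1)
    (hlip : LipschitzWith M (deriv f)) (a b : ℝ) :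
    |⟪f a - f b, deriv f b⟫ - (a - b)| ≤ M ^ 2 * |a - b| ^ 3 / 2 := by
  have := abs_inner_sub_deriv_left_sub_le hf hτ hlip b a
  have hswap : ⟪f b - f a, deriv f b⟫ - (b - a) = -(⟪f a - f b, deriv f b⟫ - (a - b)) := by
    rw [← neg_sub (f a), inner_neg_left]; ring
  rwa [hswap, abs_neg, abs_sub_comm b a] at this

theorem norm_sub_le_abs_sub (hf : Differentiable ℝ f) (hτ : ∀ r, ‖deriv f r‖ = 1) (a b : ℝ) :
    ‖f a - f b‖ ≤ |a - b| := by
  have := (lipschitzWith_of_nnnorm_deriv_le (C := 1) hf fun r => by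
    rw [← NNReal.coe_le_coe, coe_nnnorm, hτ]; rfl).dist_le_mul a b
  simpa [dist_eq_norm] using this

theorem one_sub_inner_deriv_mem_Icc (hτ : ∀ r, ‖deriv f r‖ = 1)
    (hlip : LipschitzWith M (deriv f)) (a b : ℝ) :
    1 - ⟪deriv f a, deriv f b⟫ ∈ Icc 0 (M ^ 2 * |a - b| ^ 2 / 2) := by
  rw [one_sub_real_inner_eq_of_norm_eq_one (hτ a) (hτ b)]
  refine ⟨by positivity, ?_⟩
  have := hlip.dist_le_mul a b
  rw [dist_eq_norm, Real.dist_eq] at this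
  have := norm_nonneg (deriv f a - deriv f b)
  nlinarith

theorem sq_norm_sub_bounds (hf : Differentiable ℝ f) (hτ : ∀ r, ‖deriv f r‖ = 1)
    (hlip : LipschitzWith M (deriv f)) {a b : ℝ} (hab : M * |a - b| ≤ 1) :
    (a - b) ^ 2 / 4 ≤ ‖f a - f b‖ ^ 2 ∧ (a - b) ^ 2 - M ^ 2 * (a - b) ^ 4 ≤ ‖f a - f b‖ ^ 2 ∧
      ‖f a - f b‖ ^ 2 ≤ (a - b) ^ 2 := by
  have hupper := norm_sub_le_abs_sub hf hτ a b
  have hlower : |a - b| - M ^ 2 * |a - b| ^ 3 / 2 ≤ ‖f a - f b‖ := by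
    have hchord := abs_inner_sub_deriv_left_sub_le hf hτ hlip a b
    have hcs := abs_real_inner_le_norm (f a - f b) (deriv f a)
    rw [hτ, mul_one] at hcs
    have := abs_sub_abs_le_abs_sub (a - b) ⟪f a - f b, deriv f a⟫
    rw [abs_sub_comm (a - b)] at this
    linarith
  have ht := abs_nonneg (a - b)
  rw [← sq_abs (a - b), ← (Even.pow_abs (by decide : Even 4) (a - b))]
  generalize |a - b| = t at *
  have hMt : M ^ 2 * t ^ 2 ≤ 1 := by
    have : 0 ≤ (M : ℝ) * t := by positivity
    nlinarith
  have hhalf : t / 2 ≤ ‖f a - f b‖ := by nlinarith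
  have hsq := pow_le_pow_left₀ (by nlinarith) hlower 2
  refine ⟨by nlinarith, by nlinarith, by nlinarith [norm_nonneg (f a - f b)]⟩

theorem abs_inner_mul_inner_sub_sq_le (hf : Differentiable ℝ f) (hτ : ∀ r, ‖deriv f r‖ = 1)
    (hlip : LipschitzWith M (deriv f)) {a b : ℝ} (hab : M * |a - b| ≤ 1) :
    |⟪f a - f b, deriv f a⟫ * ⟪f a - f b, deriv f b⟫ - (a - b) ^ 2|
      ≤ 5 / 4 * M ^ 2 * |a - b| ^ 4 := by
  have hN₁ := abs_inner_sub_deriv_left_sub_le hf hτ hlip a b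
  have hN₂ := abs_inner_sub_deriv_right_sub_le hf hτ hlip a b
  have hMh : M ^ 2 * |a - b| ^ 2 ≤ 1 := by
    have : 0 ≤ (M : ℝ) * |a - b| := by positivity
    nlinarith
  generalize ⟪f a - f b, deriv f a⟫ = N₁ at *
  generalize ⟪f a - f b, deriv f b⟫ = N₂ at *
  generalize a - b = h at *
  calc |N₁ * N₂ - h ^ 2| = |h * (N₁ - h) + h * (N₂ - h) + (N₁ - h) * (N₂ - h)| := by ring_nf
    _ ≤ |h| * |N₁ - h| + |h| * |N₂ - h| + |N₁ - h| * |N₂ - h| := by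
        simp only [← abs_mul]; exact abs_add_three _ _ _
    _ ≤ |h| * (M ^ 2 * |h| ^ 3 / 2) + |h| * (M ^ 2 * |h| ^ 3 / 2)
          + (M ^ 2 * |h| ^ 3 / 2) * (M ^ 2 * |h| ^ 3 / 2) := by gcongr
    _ ≤ 5 / 4 * M ^ 2 * |h| ^ 4 := by
        nlinarith [mul_le_mul_of_nonneg_right hMh (by positivity : (0 : ℝ) ≤ M ^ 2 * |h| ^ 4)]

noncomputable def cosConformalAngle (f : ℝ → E) (s₁ s₂ : ℝ) : ℝ :=
  2 * ⟪f s₁ - f s₂, deriv f s₁⟫ * ⟪f s₁ - f s₂, deriv f s₂⟫ / ‖f s₁ - f s₂‖ ^ 2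
    - ⟪deriv f s₁, deriv f s₂⟫

noncomputable def tangentChordRatio (f : ℝ → E) (s₁ s₂ : ℝ) : ℝ :=
  ⟪f s₁ - f s₂, deriv f s₁⟫ / ‖f s₁ - f s₂‖ ^ 2

theorem abs_inv_sq_norm_sub_sub_inv_sq_le (hf : Differentiable ℝ f) (hτ : ∀ r, ‖deriv f r‖ = 1)
    (hlip : LipschitzWith M (deriv f)) {a b : ℝ} (hab : M * |a - b| ≤ 1) :
    |1 / ‖f a - f b‖ ^ 2 - 1 / (a - b) ^ 2| ≤ 4 * (M : ℝ) ^ 2 := by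
  rcases eq_or_ne a b with rfl | hne
  · simp
  obtain ⟨hR₁, hR₂, hR₃⟩ := sq_norm_sub_bounds hf hτ hlip hab
  have hh : 0 < (a - b) ^ 2 := by positivity [sub_ne_zero.mpr hne]
  generalize ‖f a - f b‖ ^ 2 = R at *
  have hR : 0 < R := by linarith
  rw [div_sub_div _ _ hR.ne' hh.ne', abs_div, abs_of_pos (mul_pos hR hh),
    div_le_iff₀ (by positivity), abs_le]
  constructor <;> nlinarith

theorem abs_tangentChordRatio_sub_inv_le (hf : Differentiable ℝ f) (hτ : ∀ r, ‖deriv f r‖ = 1)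
    (hlip : LipschitzWith M (deriv f)) {a b : ℝ} (hab : M * |a - b| ≤ 1) :
    |tangentChordRatio f a b - 1 / (a - b)| ≤ 6 * M ^ 2 * |a - b| := by
  rcases eq_or_ne a b with rfl | hne
  · simp [tangentChordRatio]
  obtain ⟨hR₁, hR₂, hR₃⟩ := sq_norm_sub_bounds hf hτ hlip hab
  have hN := abs_inner_sub_deriv_left_sub_le hf hτ hlip a b
  have hh : 0 < |a - b| := abs_pos.mpr (sub_ne_zero.mpr hne)
  rw [tangentChordRatio]
  rw [← sq_abs (a - b), ← (Even.pow_abs (by decide : Even 4) (a - b))] at *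
  generalize ‖f a - f b‖ ^ 2 = R at *
  generalize ⟪f a - f b, deriv f a⟫ = N at *
  generalize a - b = h at *
  have hR : 0 < R := by nlinarith
  have hnum : |N * h - R| ≤ 3 / 2 * M ^ 2 * |h| ^ 4 := by
    calc |N * h - R| = |(N - h) * h + (|h| ^ 2 - R)| := by rw [sq_abs]; ring_nf
      _ ≤ |N - h| * |h| + |(|h| ^ 2 - R)| := by rw [← abs_mul]; exact abs_add_le _ _
      _ ≤ M ^ 2 * |h| ^ 3 / 2 * |h| + M ^ 2 * |h| ^ 4 := by
          gcongr
          rw [abs_le]; constructor <;> linarith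
      _ = 3 / 2 * M ^ 2 * |h| ^ 4 := by ring
  rw [div_sub_div _ _ hR.ne' (abs_pos.mp hh), abs_div, abs_mul, abs_of_pos hR,
    div_le_iff₀ (by positivity), mul_one]
  nlinarith

theorem abs_one_sub_cosConformalAngle_div_le (hf : Differentiable ℝ f)
    (hτ : ∀ r, ‖deriv f r‖ = 1) (hlip : LipschitzWith M (deriv f)) {a b : ℝ}
    (hab : M * |a - b| ≤ 1) :
    |(1 - cosConformalAngle f a b) / ‖f a - f b‖ ^ 2| ≤ 80 * (M : ℝ) ^ 2 := by
  rcases eq_or_ne a b with rfl | hne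
  · simp
  obtain ⟨hR₁, hR₂, hR₃⟩ := sq_norm_sub_bounds hf hτ hlip hab
  have hprod := abs_inner_mul_inner_sub_sq_le hf hτ hlip hab
  obtain ⟨hT₁, hT₂⟩ := one_sub_inner_deriv_mem_Icc hτ hlip a b
  have hh : 0 < |a - b| := abs_pos.mpr (sub_ne_zero.mpr hne)
  rw [cosConformalAngle, mul_assoc]
  rw [← sq_abs (a - b), ← (Even.pow_abs (by decide : Even 4) (a - b))] at *
  generalize ‖f a - f b‖ ^ 2 = R at *
  generalize ⟪f a - f b, deriv f a⟫ * ⟪f a - f b, deriv f b⟫ = P at *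
  generalize ⟪deriv f a, deriv f b⟫ = T at *
  generalize |a - b| = h at *
  have hR : 0 < R := by nlinarith
  have hnum : |R * (1 + T) - 2 * P| ≤ 5 * M ^ 2 * h ^ 4 := by
    calc |R * (1 + T) - 2 * P| = |2 * (R - h ^ 2) - (1 - T) * R - 2 * (P - h ^ 2)| := by ring_nf
      _ ≤ 2 * |R - h ^ 2| + (1 - T) * R + 2 * |P - h ^ 2| := by
          have := abs_sub (2 * (R - h ^ 2) - (1 - T) * R) (2 * (P - h ^ 2))
          have := abs_sub (2 * (R - h ^ 2)) ((1 - T) * R)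
          simp only [abs_mul, abs_two, abs_of_nonneg hT₁, abs_of_pos hR] at *
          linarith
      _ ≤ 2 * (M ^ 2 * h ^ 4) + (M ^ 2 * h ^ 2 / 2) * h ^ 2 + 2 * (5 / 4 * M ^ 2 * h ^ 4) := by
          gcongr
          rw [abs_le]; constructor <;> linarith
      _ = 5 * M ^ 2 * h ^ 4 := by ring
  have hsplit : (1 - (2 * P / R - T)) / R = (R * (1 + T) - 2 * P) / R ^ 2 := by
    field_simp; ring
  have hR₄ := mul_le_mul_of_nonneg_left (pow_le_pow_left₀ (by positivity) hR₁ 2)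
    (sq_nonneg (M : ℝ))
  rw [hsplit, abs_div, abs_of_pos (pow_pos hR 2), div_le_iff₀ (pow_pos hR 2)]
  nlinarith

theorem abs_cosConformalAngle_le (hτ : ∀ r, ‖deriv f r‖ = 1) (a b : ℝ) :
    |cosConformalAngle f a b| ≤ 3 := by
  have hN₁ := abs_real_inner_le_norm (f a - f b) (deriv f a)
  have hN₂ := abs_real_inner_le_norm (f a - f b) (deriv f b)
  have hT := abs_real_inner_le_norm (deriv f a) (deriv f b)
  simp only [hτ, mul_one] at hN₁ hN₂ hT
  have hquot : |2 * ⟪f a - f b, deriv f a⟫ * ⟪f a - f b, deriv f b⟫ / ‖f a - f b‖ ^ 2| ≤ 2 := by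
    rw [abs_div, abs_mul, abs_mul, abs_two, abs_of_nonneg (sq_nonneg ‖f a - f b‖), mul_assoc]
    refine div_le_of_le_mul₀ (sq_nonneg _) zero_le_two ?_
    rw [sq]; gcongr
  rw [cosConformalAngle]
  linarith [abs_sub (2 * ⟪f a - f b, deriv f a⟫ * ⟪f a - f b, deriv f b⟫ / ‖f a - f b‖ ^ 2)
    ⟪deriv f a, deriv f b⟫]

theorem Function.Periodic.cosConformalAngle (hper : Periodic f L) (s₁ : ℝ) :
    Periodic (cosConformalAngle f s₁) L := fun s₂ => by
  simp only [_root_.cosConformalAngle, hper s₂, hper.deriv s₂]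

theorem bounds_near_diagonal (hf : Differentiable ℝ f) (hτ : ∀ r, ‖deriv f r‖ = 1)
    (hlip : LipschitzWith M (deriv f)) (hper : Periodic f L) {s₁ s₂ : ℝ}
    (hnear : M * ‖((s₁ - s₂ : ℝ) : AddCircle L)‖ ≤ 1) :
    |mobiusEnergyDensity L f s₁ s₂| ≤ 4 * (M : ℝ) ^ 2 ∧
      |(1 - cosConformalAngle f s₁ s₂) / ‖f s₁ - f s₂‖ ^ 2| ≤ 80 * (M : ℝ) ^ 2 := by
  obtain ⟨k, hk⟩ : ∃ k : ℤ, ‖((s₁ - s₂ : ℝ) : AddCircle L)‖ = |s₁ - (s₂ + k * L)| :=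
    ⟨round (L⁻¹ * (s₁ - s₂)), by rw [AddCircle.norm_eq]; ring_nf⟩
  have hcoe : ((s₁ - (s₂ + k * L) : ℝ) : AddCircle L) = ((s₁ - s₂ : ℝ) : AddCircle L) := by
    simp [AddCircle.coe_period, sub_add_eq_sub_sub]
  have hD : ‖((s₁ - (s₂ + k * L) : ℝ) : AddCircle L)‖ = |s₁ - (s₂ + k * L)| := hcoe ▸ hk
  rw [← (hper.mobiusEnergyDensity s₁).int_mul k s₂, ← hper.int_mul k s₂,
    ← (hper.cosConformalAngle s₁).int_mul k s₂, mobiusEnergyDensity, hD, sq_abs]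
  have hnear' : M * |s₁ - (s₂ + k * L)| ≤ 1 := by rwa [← hD, hcoe]
  exact ⟨abs_inv_sq_norm_sub_sub_inv_sq_le hf hτ hlip hnear',
    abs_one_sub_cosConformalAngle_div_le hf hτ hlip hnear'⟩

theorem bounds_far_from_diagonal (hτ : ∀ r, ‖deriv f r‖ = 1) {s₁ s₂ c δ : ℝ} (hc : 0 < c)
    (hδ : 0 < δ) (hR : c ≤ ‖f s₁ - f s₂‖) (hD : δ ≤ ‖((s₁ - s₂ : ℝ) : AddCircle L)‖) :
    |mobiusEnergyDensity L f s₁ s₂| ≤ 1 / c ^ 2 + 1 / δ ^ 2 ∧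
      |(1 - cosConformalAngle f s₁ s₂) / ‖f s₁ - f s₂‖ ^ 2| ≤ 4 / c ^ 2 := by
  have hR₂ : c ^ 2 ≤ ‖f s₁ - f s₂‖ ^ 2 := pow_le_pow_left₀ hc.le hR 2
  have hinvR : 1 / ‖f s₁ - f s₂‖ ^ 2 ≤ 1 / c ^ 2 := one_div_le_one_div_of_le (by positivity) hR₂
  have hinvD : 1 / ‖((s₁ - s₂ : ℝ) : AddCircle L)‖ ^ 2 ≤ 1 / δ ^ 2 :=
    one_div_le_one_div_of_le (by positivity) (pow_le_pow_left₀ hδ.le hD 2)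
  constructor
  · refine (abs_sub _ _).trans ?_
    rw [abs_of_nonneg (by positivity), abs_of_nonneg (by positivity)]
    linarith
  · have hnum : |1 - cosConformalAngle f s₁ s₂| ≤ 4 := by
      linarith [abs_sub 1 (cosConformalAngle f s₁ s₂), abs_one (α := ℝ),
        abs_cosConformalAngle_le hτ s₁ s₂]
    calc |(1 - cosConformalAngle f s₁ s₂) / ‖f s₁ - f s₂‖ ^ 2|
        = |1 - cosConformalAngle f s₁ s₂| / ‖f s₁ - f s₂‖ ^ 2 := by
          rw [abs_div, abs_of_nonneg (sq_nonneg ‖f s₁ - f s₂‖)]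
      _ ≤ 4 / c ^ 2 := by gcongr

theorem exists_bound_mobiusEnergyDensity_and_one_sub_cos_div (hL : 0 < L)
    (hf : Differentiable ℝ f) (hτ : ∀ r, ‖deriv f r‖ = 1) (hlip : LipschitzWith M (deriv f))
    (hper : Periodic f L) (hinj : ∀ s₁ s₂, f s₁ = f s₂ → ∃ k : ℤ, s₁ - s₂ = k * L) :
    ∃ C, ∀ s₁ s₂, |mobiusEnergyDensity L f s₁ s₂| ≤ C ∧
      |(1 - cosConformalAngle f s₁ s₂) / ‖f s₁ - f s₂‖ ^ 2| ≤ C := by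
  set δ : ℝ := 1 / (M + 1)
  have hδ : 0 < δ := by positivity
  have hMδ : M * δ ≤ 1 := by
    rw [mul_one_div, div_le_one (by positivity)]; linarith
  obtain ⟨c, hc, hfar⟩ := exists_pos_le_norm_sub_of_le_norm_coe hL hf.continuous hper hinj hδ
  refine ⟨80 * M ^ 2 + 4 / c ^ 2 + 1 / δ ^ 2, fun s₁ s₂ => ?_⟩
  have : 1 / c ^ 2 ≤ 4 / c ^ 2 := by gcongr; norm_num
  have : 0 ≤ 1 / c ^ 2 := by positivity
  have : 0 ≤ (M : ℝ) ^ 2 := sq_nonneg _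
  have : 0 ≤ 1 / δ ^ 2 := by positivity
  by_cases hD : δ ≤ ‖((s₁ - s₂ : ℝ) : AddCircle L)‖
  · obtain ⟨h₁, h₂⟩ := bounds_far_from_diagonal hτ hc hδ (hfar s₁ s₂ hD) hD
    exact ⟨by linarith, by linarith⟩
  · have hnear : M * ‖((s₁ - s₂ : ℝ) : AddCircle L)‖ ≤ 1 :=
      (mul_le_mul_of_nonneg_left (not_le.mp hD).le M.2).trans hMδ
    obtain ⟨h₁, h₂⟩ := bounds_near_diagonal hf hτ hlip hper hnear
    exact ⟨by linarith, by linarith⟩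

theorem hasDerivAt_tangentChordRatio {s₁ s₂ : ℝ} (hf : DifferentiableAt ℝ f s₂)
    (hne : f s₁ ≠ f s₂) :
    HasDerivAt (tangentChordRatio f s₁) (cosConformalAngle f s₁ s₂ / ‖f s₁ - f s₂‖ ^ 2) s₂ := by
  have hchord : HasDerivAt (fun x => f s₁ - f x) (-deriv f s₂) s₂ :=
    hf.hasDerivAt.const_sub (f s₁)
  have hR : ‖f s₁ - f s₂‖ ≠ 0 := by simpa [sub_eq_zero] using hne
  have := (hchord.inner ℝ (hasDerivAt_const s₂ (deriv f s₁))).div hchord.norm_sq (by positivity)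
  refine this.congr_deriv ?_
  simp only [cosConformalAngle, inner_zero_right, zero_add, inner_neg_left, inner_neg_right,
    real_inner_comm (deriv f s₂)]
  field_simp
  ring

/-- At `x = s` the function is `1 / 0 - 0 / 0 = 0`, which is also its limit. -/
theorem continuousAt_one_div_sub_sub_tangentChordRatio (hf : Differentiable ℝ f)
    (hτ : ∀ r, ‖deriv f r‖ = 1) (hlip : LipschitzWith M (deriv f)) (s : ℝ) :
    ContinuousAt (fun x => 1 / (s - x) - tangentChordRatio f s x) s := by
  have hnear : ∀ᶠ x in 𝓝 s, M * |s - x| ≤ 1 :=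
    ((by fun_prop : Continuous fun x => (M : ℝ) * |s - x|).tendsto' s 0 (by simp)).eventually
      (eventually_le_nhds zero_lt_one)
  rw [ContinuousAt, show 1 / (s - s) - tangentChordRatio f s s = 0 by simp [tangentChordRatio]]
  refine squeeze_zero_norm' ?_
    ((by fun_prop : Continuous fun x => 6 * (M : ℝ) ^ 2 * |s - x|).tendsto' s 0 (by simp))
  filter_upwards [hnear] with x hx
  rw [Real.norm_eq_abs, abs_sub_comm]
  exact abs_tangentChordRatio_sub_inv_le hf hτ hlip hx

theorem integral_one_sub_cos_div_sub_mobiusEnergyDensity (hL : 0 < L) (hf : Differentiable ℝ f)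
    (hτ : ∀ r, ‖deriv f r‖ = 1) (hlip : LipschitzWith M (deriv f)) (hper : Periodic f L)
    (hinj : ∀ s₁ s₂, f s₁ = f s₂ → ∃ k : ℤ, s₁ - s₂ = k * L) (s : ℝ)
    (hint : IntervalIntegrable (fun x => (1 - cosConformalAngle f s x) / ‖f s - f x‖ ^ 2
      - mobiusEnergyDensity L f s x) volume (s - L / 2) (s + L / 2)) :
    ∫ x in (s - L / 2)..(s + L / 2), ((1 - cosConformalAngle f s x) / ‖f s - f x‖ ^ 2
      - mobiusEnergyDensity L f s x) = -(4 / L) := by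
  have hderiv : ∀ x ∈ Icc (s - L / 2) (s + L / 2) \ {s},
      HasDerivAt (fun x => 1 / (s - x) - tangentChordRatio f s x)
        ((1 - cosConformalAngle f s x) / ‖f s - f x‖ ^ 2 - mobiusEnergyDensity L f s x) x := by
    rintro x ⟨hx, hxs⟩
    have hsx : s - x ≠ 0 := sub_ne_zero.mpr (Ne.symm hxs)
    have hhalf : |s - x| ≤ L / 2 := abs_le.mpr ⟨by linarith [hx.2], by linarith [hx.1]⟩
    have hne : f s ≠ f x := apply_ne_apply_of_abs_sub_lt hL hinj (Ne.symm hxs) (by linarith)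
    have hD : ‖((s - x : ℝ) : AddCircle L)‖ = |s - x| :=
      (AddCircle.norm_coe_eq_abs_iff L hL.ne').mpr (by rwa [abs_of_pos hL])
    have := ((hasDerivAt_const x (1 : ℝ)).div ((hasDerivAt_id x).const_sub s) hsx).sub
      (hasDerivAt_tangentChordRatio (hf x) hne)
    refine this.congr_deriv ?_
    rw [mobiusEnergyDensity, hD, sq_abs, id]
    ring
  have hcont : ContinuousOn (fun x => 1 / (s - x) - tangentChordRatio f s x)
      (Icc (s - L / 2) (s + L / 2)) := fun x hx => by
    rcases eq_or_ne x s with rfl | hxs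
    · exact (continuousAt_one_div_sub_sub_tangentChordRatio hf hτ hlip x).continuousWithinAt
    · exact (hderiv x ⟨hx, hxs⟩).continuousAt.continuousWithinAt
  rw [integral_eq_of_hasDerivAt_off_countable_of_le _ _ (by linarith) (countable_singleton s)
    hcont (fun x hx => hderiv x ⟨Ioo_subset_Icc_self hx.1, hx.2⟩) hint]
  have hG : tangentChordRatio f s (s + L / 2) = tangentChordRatio f s (s - L / 2) := by
    rw [show s + L / 2 = s - L / 2 + L by ring, tangentChordRatio, tangentChordRatio, hper]
  rw [hG, show s - (s + L / 2) = -(L / 2) by ring, show s - (s - L / 2) = L / 2 by ring]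
  field_simp
  ring

theorem integral_one_sub_cos_div_eq (hL : 0 < L) (hf : Differentiable ℝ f)
    (hτ : ∀ r, ‖deriv f r‖ = 1) (hlip : LipschitzWith M (deriv f)) (hper : Periodic f L)
    (hinj : ∀ s₁ s₂, f s₁ = f s₂ → ∃ k : ℤ, s₁ - s₂ = k * L) {C : ℝ}
    (hC : ∀ s₁ s₂, |mobiusEnergyDensity L f s₁ s₂| ≤ C ∧
      |(1 - cosConformalAngle f s₁ s₂) / ‖f s₁ - f s₂‖ ^ 2| ≤ C) (s : ℝ) :
    ∫ x in (0 : ℝ)..L, (1 - cosConformalAngle f s x) / ‖f s - f x‖ ^ 2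
      = (∫ x in (0 : ℝ)..L, mobiusEnergyDensity L f s x) - 4 / L := by
  have hfc := hf.continuous
  have hτc := hlip.continuous
  have hR : Measurable fun x => ‖f s - f x‖ := (by fun_prop : Continuous _).measurable
  have hN₁ : Measurable fun x => ⟪f s - f x, deriv f s⟫ := (by fun_prop : Continuous _).measurable
  have hN₂ : Measurable fun x => ⟪f s - f x, deriv f x⟫ := (by fun_prop : Continuous _).measurable
  have hT : Measurable fun x => ⟪deriv f s, deriv f x⟫ := (by fun_prop : Continuous _).measurable
  have hE : ∀ a b, IntervalIntegrable (mobiusEnergyDensity L f s) volume a b := fun a b =>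
    intervalIntegrable_const.mono_fun'
      (by unfold mobiusEnergyDensity; fun_prop : Measurable _).aestronglyMeasurable
      (ae_of_all _ fun x => (hC s x).1)
  have hQ : ∀ a b, IntervalIntegrable (fun x => (1 - cosConformalAngle f s x) / ‖f s - f x‖ ^ 2)
      volume a b := fun a b =>
    intervalIntegrable_const.mono_fun'
      (by unfold cosConformalAngle; fun_prop : Measurable _).aestronglyMeasurable
      (ae_of_all _ fun x => (hC s x).2)
  have hperW : Periodic (fun x => (1 - cosConformalAngle f s x) / ‖f s - f x‖ ^ 2
      - mobiusEnergyDensity L f s x) L := fun x => by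
    simp only [hper.cosConformalAngle s x, hper x, hper.mobiusEnergyDensity s x]
  have hshift := hperW.intervalIntegral_add_eq 0 (s - L / 2)
  rw [zero_add, show s - L / 2 + L = s + L / 2 by ring,
    integral_one_sub_cos_div_sub_mobiusEnergyDensity hL hf hτ hlip hper hinj s
      ((hQ _ _).sub (hE _ _)), intervalIntegral.integral_sub (hQ 0 L) (hE 0 L)] at hshift
  linarith

end InnerProductSpace

theorem cosine_formula
    (n : ℕ) (L : ℝ) (hL : 0 < L)
    (f : ℝ → EuclideanSpace ℝ (Fin n))
    (hper : ∀ s : ℝ, f (s + L) = f s)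
    (hC2 : ContDiff ℝ 2 f)
    (harc : ∀ s : ℝ, ‖deriv f s‖ = 1)
    (hinj : ∀ s₁ s₂ : ℝ, f s₁ = f s₂ → ∃ k : ℤ, s₁ - s₂ = k * L) :
    (∫ s₁ in (0:ℝ)..L, ∫ s₂ in (0:ℝ)..L,
      (1 - (2 * ⟪f s₁ - f s₂, deriv f s₁⟫ * ⟪f s₁ - f s₂, deriv f s₂⟫
              / ‖f s₁ - f s₂‖ ^ 2
            - ⟪deriv f s₁, deriv f s₂⟫))
        / ‖f s₁ - f s₂‖ ^ 2)
    = (∫ s₁ in (0:ℝ)..L, ∫ s₂ in (0:ℝ)..L,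
        (1 / ‖f s₁ - f s₂‖ ^ 2 - 1 / (⨅ k : ℤ, |s₁ - s₂ + (k : ℝ) * L|) ^ 2)) - 4 := by
  obtain ⟨hf, -, hτ₁⟩ := contDiff_succ_iff_deriv.mp (show ContDiff ℝ (1 + 1) f from hC2)
  obtain ⟨M, hlip⟩ := (Periodic.deriv hper).exists_lipschitzWith hL.ne' hτ₁
  obtain ⟨C, hC⟩ := exists_bound_mobiusEnergyDensity_and_one_sub_cos_div hL hf harc hlip hper hinj
  simp_rw [iInf_abs_add_intCast_mul_eq_norm_coe]
  change ∫ s₁ in (0:ℝ)..L, ∫ s₂ in (0:ℝ)..L, (1 - cosConformalAngle f s₁ s₂) / ‖f s₁ - f s₂‖ ^ 2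
    = (∫ s₁ in (0:ℝ)..L, ∫ s₂ in (0:ℝ)..L, mobiusEnergyDensity L f s₁ s₂) - 4
  rw [intervalIntegral.integral_congr fun s _ =>
      integral_one_sub_cos_div_eq hL hf harc hlip hper hinj hC s,
    intervalIntegral.integral_sub (intervalIntegrable_integral_mobiusEnergyDensity hL.le
      hf.continuous fun s₁ s₂ => (hC s₁ s₂).1) intervalIntegrable_const,
    intervalIntegral.integral_const, smul_eq_mul, sub_zero, mul_div_cancel₀ _ hL.ne']
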